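/- arXiv:1311.3329 — 2 statements merged into one kernel-verified Lean document; each statement's English description precedes it below -/
import Mathlib

section
/- Let ω ⊂ ℝ^{n-1} be a bounded convex domain, 0 < α < 1, and η ∈ C^{0,α}(ω̄) with η ≥ η_min > 0. Then for every x₀, x₁ ∈ ω there exists a piecewise smooth curve Θ : [0,2] → Ω̄_η with Θ(0) = (x₀, η(x₀)), Θ(2) = (x₁, η(x₁)), Θ(r) ∈ Ω̄_η for all r, and |Θ'(r)| ≤ C |x₁ - x₀|^α for a.e. r ∈ [0,2], where C depends only on ω, η, and α (not on x₀, x₁). -/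
/-!
The curve drops vertically from `(x₀, η x₀)` to the level `c = max (η x₀ - L ‖x₁ - x₀‖ ^ α) ηmin`,
runs horizontally along the segment `[x₀, x₁]` at that level, and rises vertically to
`(x₁, η x₁)`, each leg taking time `2/3`. By Hölder continuity `η ≥ c` on the segment, so the curve
stays in the closed subgraph, and both vertical legs have length at most `2 L ‖x₁ - x₀‖ ^ α`.
The horizontal leg has length `‖x₁ - x₀‖ ≤ M ‖x₁ - x₀‖ ^ α` with `M = max (diam ω) 1`, since `α ≤ 1`.
-/

open Set MeasureTheory

noncomputable section

def ramp (a b r : ℝ) : ℝ := min 1 (max 0 ((r - a) / (b - a)))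

def rampDeriv (a b r : ℝ) : ℝ := if r ∈ Ioo a b then (b - a)⁻¹ else 0

section Ramp

variable {a b r : ℝ}

lemma ramp_mem_Icc : ramp a b r ∈ Icc 0 1 :=
  ⟨le_min zero_le_one (le_max_left _ _), min_le_left _ _⟩

lemma continuous_ramp : Continuous (ramp a b) := by
  unfold ramp
  fun_prop

lemma ramp_of_le (hab : a < b) (hr : r ≤ a) : ramp a b r = 0 := by
  have : (r - a) / (b - a) ≤ 0 := div_nonpos_of_nonpos_of_nonneg (by linarith) (by linarith)
  simp [ramp, max_eq_left this]

lemma ramp_of_ge (hab : a < b) (hr : b ≤ r) : ramp a b r = 1 := by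
  have : 1 ≤ (r - a) / (b - a) := by rw [le_div_iff₀ (by linarith)]; linarith
  simp [ramp, max_eq_right (zero_le_one.trans this), this]

lemma ramp_of_mem_Icc (hab : a < b) (hr : r ∈ Icc a b) : ramp a b r = (r - a) / (b - a) := by
  have h₀ : 0 ≤ (r - a) / (b - a) := div_nonneg (by linarith [hr.1]) (by linarith)
  have h₁ : (r - a) / (b - a) ≤ 1 := by rw [div_le_one₀ (by linarith)]; linarith [hr.2]
  simp [ramp, max_eq_right h₀, h₁]

lemma hasDerivAt_ramp (hab : a < b) (ha : r ≠ a) (hb : r ≠ b) :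
    HasDerivAt (ramp a b) (rampDeriv a b r) r := by
  rcases ha.lt_or_gt with hra | hra
  · rw [rampDeriv, if_neg fun h => h.1.not_gt hra]
    refine (hasDerivAt_const r 0).congr_of_eventuallyEq ?_
    filter_upwards [Iio_mem_nhds hra] with s hs using ramp_of_le hab (le_of_lt hs)
  rcases hb.lt_or_gt with hrb | hrb
  · rw [rampDeriv, if_pos ⟨hra, hrb⟩]
    have hlin : HasDerivAt (fun s => (s - a) / (b - a)) (b - a)⁻¹ r := by
      simpa [div_eq_mul_inv] using ((hasDerivAt_id r).sub_const a).div_const (b - a)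
    refine hlin.congr_of_eventuallyEq ?_
    filter_upwards [Ioo_mem_nhds hra hrb] with s hs
    exact ramp_of_mem_Icc hab (Ioo_subset_Icc_self hs)
  · rw [rampDeriv, if_neg fun h => h.2.not_gt hrb]
    refine (hasDerivAt_const r 1).congr_of_eventuallyEq ?_
    filter_upwards [Ioi_mem_nhds hrb] with s hs using ramp_of_ge hab (le_of_lt hs)

lemma norm_rampDeriv_le (hab : a ≤ b) : ‖rampDeriv a b r‖ ≤ (b - a)⁻¹ := by
  unfold rampDeriv
  split_ifs <;> simp [abs_of_nonneg (sub_nonneg.2 hab), hab]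

end Ramp

section Detour

variable {E : Type*} [NormedAddCommGroup E] [NormedSpace ℝ E] (x₀ x₁ : E) (y₀ c y₁ : ℝ)

def detour (r : ℝ) : E × ℝ :=
  (x₀ + ramp (2/3) (4/3) r • (x₁ - x₀),
    y₀ + ramp 0 (2/3) r * (c - y₀) + ramp (4/3) 2 r * (y₁ - c))

def detourDeriv (r : ℝ) : E × ℝ :=
  (rampDeriv (2/3) (4/3) r • (x₁ - x₀),
    rampDeriv 0 (2/3) r * (c - y₀) + rampDeriv (4/3) 2 r * (y₁ - c))

lemma continuous_detour : Continuous (detour x₀ x₁ y₀ c y₁) := by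
  have h₁ : Continuous (ramp (2/3) (4/3)) := continuous_ramp
  have h₂ : Continuous (ramp 0 (2/3)) := continuous_ramp
  have h₃ : Continuous (ramp (4/3) 2) := continuous_ramp
  unfold detour
  fun_prop

lemma detour_zero : detour x₀ x₁ y₀ c y₁ 0 = (x₀, y₀) := by
  simp [detour, ramp_of_le (a := 0) (b := 2/3) (by norm_num) le_rfl,
    ramp_of_le (a := 2/3) (b := 4/3) (by norm_num) (by norm_num : (0 : ℝ) ≤ 2/3),
    ramp_of_le (a := 4/3) (b := 2) (by norm_num) (by norm_num : (0 : ℝ) ≤ 4/3)]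


lemma detour_two : detour x₀ x₁ y₀ c y₁ 2 = (x₁, y₁) := by
  simp only [detour, ramp_of_ge (a := 2/3) (b := 4/3) (by norm_num) (by norm_num : (4/3 : ℝ) ≤ 2),
    ramp_of_ge (a := 0) (b := 2/3) (by norm_num) (by norm_num : (2/3 : ℝ) ≤ 2),
    ramp_of_ge (a := 4/3) (b := 2) (by norm_num) le_rfl, one_smul, one_mul, Prod.mk.injEq]
  constructor <;> abel

lemma hasDerivAt_detour {r : ℝ} (hr : r ∉ ({0, 2/3, 4/3, 2} : Finset ℝ)) :
    HasDerivAt (detour x₀ x₁ y₀ c y₁) (detourDeriv x₀ x₁ y₀ c y₁ r) r := by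
  simp only [Finset.mem_insert, Finset.mem_singleton, not_or] at hr
  obtain ⟨h₀, h₁, h₂, h₃⟩ := hr
  have hx := ((hasDerivAt_ramp (by norm_num) h₁ h₂).smul_const (x₁ - x₀)).const_add x₀
  have hy := (((hasDerivAt_ramp (by norm_num) h₀ h₁).mul_const (c - y₀)).const_add y₀).add
    ((hasDerivAt_ramp (by norm_num) h₂ h₃).mul_const (y₁ - c))
  exact hx.prodMk hy

lemma norm_detourDeriv_le (r : ℝ) :
    ‖detourDeriv x₀ x₁ y₀ c y₁ r‖ ≤ 3/2 * (‖x₁ - x₀‖ + |c - y₀| + |y₁ - c|) := by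
  have h₁ := norm_rampDeriv_le (a := 2/3) (b := 4/3) (r := r) (by norm_num)
  have h₂ := norm_rampDeriv_le (a := 0) (b := 2/3) (r := r) (by norm_num)
  have h₃ := norm_rampDeriv_le (a := 4/3) (b := 2) (r := r) (by norm_num)
  norm_num [Real.norm_eq_abs] at h₁ h₂ h₃
  rw [detourDeriv, Prod.norm_mk, norm_smul, Real.norm_eq_abs, Real.norm_eq_abs]
  refine max_le ?_ ?_
  · calc _ ≤ 3/2 * ‖x₁ - x₀‖ := by gcongr
      _ ≤ _ := by gcongr; linarith [abs_nonneg (c - y₀), abs_nonneg (y₁ - c)]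
  · calc _ ≤ |rampDeriv 0 (2/3) r| * |c - y₀| + |rampDeriv (4/3) 2 r| * |y₁ - c| := by
          rw [← abs_mul, ← abs_mul]; exact abs_add_le _ _
      _ ≤ 3/2 * |c - y₀| + 3/2 * |y₁ - c| := by gcongr
      _ ≤ _ := by linarith [norm_nonneg (x₁ - x₀)]

lemma detour_mem_union (r : ℝ) :
    detour x₀ x₁ y₀ c y₁ r ∈
      (x₀, ·) '' segment ℝ y₀ c ∪ (·, c) '' segment ℝ x₀ x₁ ∪ (x₁, ·) '' segment ℝ c y₁ := by
  simp only [segment_eq_image', image_image]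
  rcases le_total r (2/3) with h₁ | h₁
  · refine Or.inl (Or.inl ⟨ramp 0 (2/3) r, ramp_mem_Icc, ?_⟩)
    simp [detour, ramp_of_le (a := 2/3) (b := 4/3) (by norm_num) (h₁.trans (by norm_num)),
      ramp_of_le (a := 4/3) (b := 2) (by norm_num) (h₁.trans (by norm_num))]
  rcases le_total r (4/3) with h₂ | h₂
  · refine Or.inl (Or.inr ⟨ramp (2/3) (4/3) r, ramp_mem_Icc, ?_⟩)
    simp [detour, ramp_of_ge (a := 0) (b := 2/3) (by norm_num) h₁,
      ramp_of_le (a := 4/3) (b := 2) (by norm_num) h₂]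
  · refine Or.inr ⟨ramp (4/3) 2 r, ramp_mem_Icc, ?_⟩
    simp [detour, ramp_of_ge (a := 0) (b := 2/3) (by norm_num) h₁,
      ramp_of_ge (a := 2/3) (b := 4/3) (by norm_num) h₂]

end Detour

section Subgraph

lemma mk_mem_closure_subgraph {X : Type*} [TopologicalSpace X] {ω : Set X} {η : X → ℝ}
    {x : X} {y : ℝ} (hx : x ∈ ω) (hy : y ∈ Ioc 0 (η x)) :
    (x, y) ∈ closure {p : X × ℝ | p.1 ∈ ω ∧ 0 < p.2 ∧ p.2 < η p.1} := by
  have hsub : {x} ×ˢ Ioo 0 (η x) ⊆ {p : X × ℝ | p.1 ∈ ω ∧ 0 < p.2 ∧ p.2 < η p.1} := by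
    rintro ⟨x', y'⟩ ⟨rfl, hy'⟩
    exact ⟨hx, hy'⟩
  refine closure_mono hsub ?_
  rw [closure_prod_eq, closure_Ioo (hy.1.trans_le hy.2).ne]
  exact ⟨subset_closure rfl, Ioc_subset_Icc_self hy⟩

variable {E : Type*} [NormedAddCommGroup E] [NormedSpace ℝ E] {ω : Set E} {η : E → ℝ}

lemma detour_mem_closure_subgraph (hω : Convex ℝ ω) {x₀ x₁ : E} (hx₀ : x₀ ∈ ω) (hx₁ : x₁ ∈ ω)
    {y₀ c y₁ : ℝ} (hc : 0 < c) (hseg : ∀ x ∈ segment ℝ x₀ x₁, c ≤ η x)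
    (hy₀ : y₀ ∈ Ioc 0 (η x₀)) (hy₁ : y₁ ∈ Ioc 0 (η x₁)) (r : ℝ) :
    detour x₀ x₁ y₀ c y₁ r ∈ closure {p : E × ℝ | p.1 ∈ ω ∧ 0 < p.2 ∧ p.2 < η p.1} := by
  have hc₀ : c ∈ Ioc 0 (η x₀) := ⟨hc, hseg x₀ (left_mem_segment ℝ x₀ x₁)⟩
  have hc₁ : c ∈ Ioc 0 (η x₁) := ⟨hc, hseg x₁ (right_mem_segment ℝ x₀ x₁)⟩
  rcases detour_mem_union x₀ x₁ y₀ c y₁ r with (⟨y, hy, hr⟩ | ⟨x, hx, hr⟩) | ⟨y, hy, hr⟩ <;>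
    rw [← hr] <;> refine mk_mem_closure_subgraph ?_ ?_
  · exact hx₀
  · exact (convex_Ioc _ _).segment_subset hy₀ hc₀ hy
  · exact hω.segment_subset hx₀ hx₁ hx
  · exact ⟨hc, hseg x hx⟩
  · exact hx₁
  · exact (convex_Ioc _ _).segment_subset hc₁ hy₁ hy

end Subgraph

lemma sub_mul_rpow_le_of_holder {E : Type*} [SeminormedAddCommGroup E] {s : Set E} {η : E → ℝ}
    {L α d : ℝ} (hHol : ∀ x ∈ s, ∀ y ∈ s, |η x - η y| ≤ L * ‖x - y‖ ^ α) (hL : 0 ≤ L)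
    (hα : 0 ≤ α) {x₀ x : E} (hx₀ : x₀ ∈ s) (hx : x ∈ s) (hd : ‖x - x₀‖ ≤ d) :
    η x₀ - L * d ^ α ≤ η x := by
  have h := hHol x₀ hx₀ x hx
  rw [norm_sub_rev] at h
  calc η x₀ - L * d ^ α ≤ η x₀ - L * ‖x - x₀‖ ^ α := by gcongr
    _ ≤ η x := by linarith [(abs_le.mp h).2]

lemma le_mul_rpow_of_le {d M α : ℝ} (hd : 0 ≤ d) (hdM : d ≤ M) (hM : 1 ≤ M) (hα₀ : 0 ≤ α)
    (hα₁ : α ≤ 1) : d ≤ M * d ^ α := by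
  rcases hd.eq_or_lt with rfl | hd
  · exact mul_nonneg (zero_le_one.trans hM) (Real.rpow_nonneg le_rfl α)
  calc d = d ^ (1 - α) * d ^ α := by rw [← Real.rpow_add hd, sub_add_cancel, Real.rpow_one]
    _ ≤ M ^ (1 - α) * d ^ α := by gcongr
    _ ≤ M * d ^ α := by
        gcongr
        simpa using Real.rpow_le_rpow_of_exponent_le hM (by linarith : 1 - α ≤ 1)

end

theorem stmt7_general {n : ℕ} (ω : Set (EuclideanSpace ℝ (Fin (n - 1))))
    (hconv : Convex ℝ ω) (hbdd : Bornology.IsBounded ω)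
    (α L ηmin : ℝ) (hα0 : 0 < α) (hα1 : α < 1) (hL : 0 ≤ L) (hηmin : 0 < ηmin)
    (η : EuclideanSpace ℝ (Fin (n - 1)) → ℝ)
    (hHol : ∀ x ∈ closure ω, ∀ y ∈ closure ω, |η x - η y| ≤ L * ‖x - y‖ ^ α)
    (hlb : ∀ x ∈ closure ω, ηmin ≤ η x) :
    ∃ C > 0, ∀ x₀ ∈ ω, ∀ x₁ ∈ ω,
      ∃ Θ Θ' : ℝ → EuclideanSpace ℝ (Fin (n - 1)) × ℝ, ∃ F : Finset ℝ,
        ContinuousOn Θ (Icc (0:ℝ) 2) ∧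
        Θ 0 = (x₀, η x₀) ∧ Θ 2 = (x₁, η x₁) ∧
        (∀ r ∈ Icc (0:ℝ) 2,
          Θ r ∈ closure {p : EuclideanSpace ℝ (Fin (n - 1)) × ℝ |
            p.1 ∈ ω ∧ 0 < p.2 ∧ p.2 < η p.1}) ∧
        (∀ r ∈ Icc (0:ℝ) 2 \ (F : Set ℝ), HasDerivAt Θ (Θ' r) r) ∧
        (∀ᵐ r ∂(volume.restrict (Icc (0:ℝ) 2)), ‖Θ' r‖ ≤ C * ‖x₁ - x₀‖ ^ α) := by
  obtain ⟨D, hD⟩ := Metric.isBounded_iff.mp hbdd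
  set M := max D 1
  have hM : 1 ≤ M := le_max_right D 1
  refine ⟨3/2 * (M + 3 * L), by positivity, fun x₀ hx₀ x₁ hx₁ => ?_⟩
  set d := ‖x₁ - x₀‖
  set c := max (η x₀ - L * d ^ α) ηmin
  have hc : ∀ x ∈ closure ω, ‖x - x₀‖ ≤ d → c ≤ η x := fun x hx hxd =>
    max_le (sub_mul_rpow_le_of_holder hHol hL hα0.le (subset_closure hx₀) hx hxd) (hlb x hx)
  have hc₀ : c ≤ η x₀ := hc x₀ (subset_closure hx₀) (by simp [d])
  have hc₁ : c ≤ η x₁ := hc x₁ (subset_closure hx₁) le_rfl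
  have hη₁ : η x₁ ≤ η x₀ + L * d ^ α := by
    linarith [(abs_le.mp (hHol x₁ (subset_closure hx₁) x₀ (subset_closure hx₀))).2]
  have hcpos : 0 < c := hηmin.trans_le (le_max_right _ _)
  refine ⟨detour x₀ x₁ (η x₀) c (η x₁), detourDeriv x₀ x₁ (η x₀) c (η x₁), {0, 2/3, 4/3, 2},
    (continuous_detour ..).continuousOn, detour_zero .., detour_two .., fun r _ => ?_,
    fun r hr => hasDerivAt_detour _ _ _ _ _ hr.2, ae_of_all _ fun r => ?_⟩
  · exact detour_mem_closure_subgraph hconv hx₀ hx₁ hcpos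
      (fun x hx => hc x (subset_closure (hconv.segment_subset hx₀ hx₁ hx))
        (norm_sub_le_of_mem_segment hx))
      ⟨hcpos.trans_le hc₀, le_rfl⟩ ⟨hcpos.trans_le hc₁, le_rfl⟩ r
  · have hdM : d ≤ M := (dist_eq_norm x₁ x₀ ▸ hD hx₁ hx₀).trans (le_max_left D 1)
    calc _ ≤ 3/2 * (d + |c - η x₀| + |η x₁ - c|) := norm_detourDeriv_le ..
      _ ≤ 3/2 * (M * d ^ α + L * d ^ α + 2 * (L * d ^ α)) := by
          gcongr
          · exact le_mul_rpow_of_le (norm_nonneg _) hdM hM hα0.le hα1.le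
          · rw [abs_of_nonpos (by linarith)]; linarith [le_max_left (η x₀ - L * d ^ α) ηmin]
          · rw [abs_of_nonneg (by linarith)]; linarith [le_max_left (η x₀ - L * d ^ α) ηmin]
      _ = 3/2 * (M + 3 * L) * d ^ α := by ring

/-- existence of piecewise-smooth connecting curves in the closed subgraph
domain, with derivative bounded by `C |x₁ - x₀|^α`, `C` uniform in `x₀, x₁`. -/
theorem stmt7 {n : ℕ} (hn : 2 ≤ n) (ω : Set (EuclideanSpace ℝ (Fin (n - 1))))
    (hopen : IsOpen ω) (hconv : Convex ℝ ω) (hbdd : Bornology.IsBounded ω)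
    (α L ηmin : ℝ) (hα0 : 0 < α) (hα1 : α < 1) (hL : 0 ≤ L) (hηmin : 0 < ηmin)
    (η : EuclideanSpace ℝ (Fin (n - 1)) → ℝ)
    (hHol : ∀ x ∈ closure ω, ∀ y ∈ closure ω, |η x - η y| ≤ L * ‖x - y‖ ^ α)
    (hlb : ∀ x ∈ closure ω, ηmin ≤ η x) :
    ∃ C > 0, ∀ x₀ ∈ ω, ∀ x₁ ∈ ω,
      ∃ Θ Θ' : ℝ → EuclideanSpace ℝ (Fin (n - 1)) × ℝ, ∃ F : Finset ℝ,
        ContinuousOn Θ (Icc (0:ℝ) 2) ∧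
        Θ 0 = (x₀, η x₀) ∧ Θ 2 = (x₁, η x₁) ∧
        (∀ r ∈ Icc (0:ℝ) 2,
          Θ r ∈ closure {p : EuclideanSpace ℝ (Fin (n - 1)) × ℝ |
            p.1 ∈ ω ∧ 0 < p.2 ∧ p.2 < η p.1}) ∧
        (∀ r ∈ Icc (0:ℝ) 2 \ (F : Set ℝ), HasDerivAt Θ (Θ' r) r) ∧
        (∀ᵐ r ∂(volume.restrict (Icc (0:ℝ) 2)), ‖Θ' r‖ ≤ C * ‖x₁ - x₀‖ ^ α) :=
  stmt7_general ω hconv hbdd α L ηmin hα0 hα1 hL hηmin η hHol hlb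
end

section
/- Let ω ⊂ ℝ^{n-1}, 0 < α < 1, L > 0, and let x₀, x₁ ∈ ω. Suppose η : ω → ℝ is α-Hölder with constant L, η ≥ η_min > 0, and that the function r ↦ y_r = η(x₀) - L r |x₁ - x₀|^α on [0,1] crosses the level η_min at some r₀ ∈ (0,1). Then the truncated curve r ↦ (x_r, max(y_r, η_min)) for r ∈ [0,1], with x_r = x₀ + r^{1/α}(x₁ - x₀), remains in the closed subgraph {(x, y) : x ∈ ω, η_min ≤ y ≤ η(x)} (assuming x_r ∈ ω for all r) and is Lipschitz in r with a.e. derivative bounded by C(1 + L)(1 + 1/α) max(1, diam(ω)^{1-α}) |x₁ - x₀|^α for an absolute constant C. -/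
open Set

/-!
Hölder continuity gives `η x_r ≥ η x₀ - L ‖x_r - x₀‖^α`, and the exponent `1/α` in
`x_r = x₀ + r^{1/α} (x₁ - x₀)` is chosen exactly so that `‖x_r - x₀‖^α = r ‖x₁ - x₀‖^α`:
the descent `y_r` therefore stays below the graph, and truncating it at `η_min` keeps it above
the floor. For the Lipschitz bound, `r ↦ r^{1/α}` is `1/α`-Lipschitz on `[0, 1]` since `α ≤ 1`,
truncation by `max` does not increase Lipschitz constants, and
`‖x₁ - x₀‖ ≤ diam(ω)^{1-α} ‖x₁ - x₀‖^α` puts the horizontal speed on the scale `‖x₁ - x₀‖^α`.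
The constant `C = 1` works.
-/

theorem Real.lipschitzOnWith_rpow_Icc {p : ℝ} (hp : 1 ≤ p) :
    LipschitzOnWith p.toNNReal (fun r : ℝ => r ^ p) (Icc 0 1) := by
  have hp0 : 0 ≤ p := zero_le_one.trans hp
  refine (convex_Icc 0 1).lipschitzOnWith_of_nnnorm_hasDerivWithin_le
    (fun x _ => (Real.hasDerivAt_rpow_const (Or.inr hp)).hasDerivWithinAt) fun x hx => ?_
  rw [← NNReal.coe_le_coe, coe_nnnorm, Real.coe_toNNReal _ hp0, Real.norm_eq_abs,
    abs_of_nonneg (by have := Real.rpow_nonneg hx.1 (p - 1); positivity)]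
  exact mul_le_of_le_one_right hp0 (Real.rpow_le_one hx.1 hx.2 (by linarith))

theorem lipschitzWith_const_add_smul {E : Type*} [SeminormedAddCommGroup E] [NormedSpace ℝ E]
    (a w : E) : LipschitzWith ‖w‖₊ (fun t : ℝ => a + t • w) :=
  LipschitzWith.of_dist_le_mul fun s t => by
    rw [dist_add_left, dist_eq_norm, ← sub_smul, norm_smul, mul_comm, Real.dist_eq,
      Real.norm_eq_abs, coe_nnnorm]

theorem dist_le_diam_rpow_mul_dist_rpow {X : Type*} [PseudoMetricSpace X] {s : Set X}
    (hs : Bornology.IsBounded s) {x y : X} (hx : x ∈ s) (hy : y ∈ s) {α : ℝ} (hα : α ≤ 1) :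
    dist x y ≤ Metric.diam s ^ (1 - α) * dist x y ^ α := by
  rcases (dist_nonneg (x := x) (y := y)).eq_or_lt with h0 | hpos
  · rw [← h0]
    positivity
  calc dist x y = dist x y ^ (1 - α) * dist x y ^ α := by
        rw [← Real.rpow_add hpos, sub_add_cancel, Real.rpow_one]
    _ ≤ Metric.diam s ^ (1 - α) * dist x y ^ α := by
        gcongr
        exact Metric.dist_le_diam_of_mem hs hx hy

theorem norm_rpow_one_div_smul_rpow {E : Type*} [SeminormedAddCommGroup E] [NormedSpace ℝ E]
    {α r : ℝ} (hα : α ≠ 0) (hr : 0 ≤ r) (v : E) :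
    ‖r ^ (1 / α) • v‖ ^ α = r * ‖v‖ ^ α := by
  rw [norm_smul, Real.norm_of_nonneg (Real.rpow_nonneg hr _),
    Real.mul_rpow (Real.rpow_nonneg hr _) (norm_nonneg v), ← Real.rpow_mul hr,
    one_div_mul_cancel hα, Real.rpow_one]

theorem sub_mul_norm_rpow_le_of_holder {E : Type*} [SeminormedAddCommGroup E] [NormedSpace ℝ E]
    {ω : Set E} {η : E → ℝ} {L α r : ℝ}
    (hη : ∀ x ∈ ω, ∀ y ∈ ω, |η x - η y| ≤ L * ‖x - y‖ ^ α) (hα : α ≠ 0) (hr : 0 ≤ r)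
    {x₀ v : E} (hx₀ : x₀ ∈ ω) (hxr : x₀ + r ^ (1 / α) • v ∈ ω) :
    η x₀ - L * r * ‖v‖ ^ α ≤ η (x₀ + r ^ (1 / α) • v) := by
  have h := (abs_le.mp (hη _ hxr _ hx₀)).1
  rw [add_sub_cancel_left, norm_rpow_one_div_smul_rpow hα hr, ← mul_assoc] at h
  linarith

theorem lipschitzOnWith_truncated_descent {E : Type*} [SeminormedAddCommGroup E]
    [NormedSpace ℝ E] {α : ℝ} (hα₀ : 0 < α) (hα₁ : α ≤ 1) (x₀ v : E) (a b L c : ℝ) :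
    LipschitzOnWith (max (‖v‖₊ * (1 / α).toNNReal) ‖L * c‖₊)
      (fun r : ℝ => (x₀ + r ^ (1 / α) • v, max (a - L * r * c) b)) (Icc 0 1) := by
  have hx := (lipschitzWith_const_add_smul x₀ v).comp_lipschitzOnWith
    (Real.lipschitzOnWith_rpow_Icc ((one_le_div hα₀).mpr hα₁))
  have hy : LipschitzWith ‖L * c‖₊ fun r : ℝ => a - L * r * c := by
    have hfun : (fun r : ℝ => a - L * r * c) = fun r => a + r • -(L * c) := by
      ext r
      rw [smul_eq_mul]
      ring
    rw [hfun, ← nnnorm_neg (L * c)]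
    exact lipschitzWith_const_add_smul a _
  exact hx.prodMk (hy.max_const b).lipschitzOnWith

/-- Case 2 of the curve construction: the truncated descending curve
`r ↦ (x_r, max(y_r, η_min))` stays in the closed subgraph `{η_min ≤ y ≤ η(x)}` and is
Lipschitz with constant `C(1+L)(1+1/α)max(1, diam(ω)^{1-α})|x₁-x₀|^α` for an absolute
constant `C`. -/
theorem stmt16 :
    ∃ C > 0, ∀ (m : ℕ) (ω : Set (EuclideanSpace ℝ (Fin m))),
      Bornology.IsBounded ω → ∀ (α L ηmin : ℝ), 0 < α → α < 1 → 0 < L → 0 < ηmin →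
      ∀ η : EuclideanSpace ℝ (Fin m) → ℝ,
      (∀ x ∈ ω, ∀ y ∈ ω, |η x - η y| ≤ L * ‖x - y‖ ^ α) →
      (∀ x ∈ ω, ηmin ≤ η x) →
      ∀ x₀ ∈ ω, ∀ x₁ ∈ ω,
      (∀ r ∈ Icc (0:ℝ) 1, x₀ + r ^ (1/α) • (x₁ - x₀) ∈ ω) →
      (∃ r₀ ∈ Ioo (0:ℝ) 1, η x₀ - L * r₀ * ‖x₁ - x₀‖ ^ α = ηmin) →
      (∀ r ∈ Icc (0:ℝ) 1,
        ηmin ≤ max (η x₀ - L * r * ‖x₁ - x₀‖ ^ α) ηmin ∧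
        max (η x₀ - L * r * ‖x₁ - x₀‖ ^ α) ηmin ≤ η (x₀ + r ^ (1/α) • (x₁ - x₀))) ∧
      LipschitzOnWith
        (Real.toNNReal (C * (1 + L) * (1 + 1/α) * max 1 (Metric.diam ω ^ (1 - α)) *
          ‖x₁ - x₀‖ ^ α))
        (fun r : ℝ =>
          ((x₀ + r ^ (1/α) • (x₁ - x₀), max (η x₀ - L * r * ‖x₁ - x₀‖ ^ α) ηmin) :
            EuclideanSpace ℝ (Fin m) × ℝ))
        (Icc (0:ℝ) 1) := by
  refine ⟨1, one_pos, fun m ω hω α L ηmin hα₀ hα₁ hL _ η hη hηmin x₀ hx₀ x₁ hx₁ hcurve _ => ?_⟩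
  refine ⟨fun r hr => ⟨le_max_right _ _, max_le ?_ (hηmin _ (hcurve r hr))⟩, ?_⟩
  · exact sub_mul_norm_rpow_le_of_holder hη hα₀.ne' hr.1 hx₀ (hcurve r hr)
  set D := max 1 (Metric.diam ω ^ (1 - α))
  set M := ‖x₁ - x₀‖ ^ α
  have hM : 0 ≤ M := by positivity
  have hD : 1 ≤ D := le_max_left _ _
  have hv : ‖x₁ - x₀‖ ≤ D * M := by
    calc ‖x₁ - x₀‖ ≤ Metric.diam ω ^ (1 - α) * M := by
          simpa only [dist_eq_norm] using dist_le_diam_rpow_mul_dist_rpow hω hx₁ hx₀ hα₁.le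
      _ ≤ D * M := by gcongr; exact le_max_right _ _
  refine (lipschitzOnWith_truncated_descent hα₀ hα₁.le x₀ (x₁ - x₀) _ ηmin L M).weaken
    (max_le ?_ ?_) <;> rw [Real.le_toNNReal_iff_coe_le (by positivity)]
  · rw [NNReal.coe_mul, coe_nnnorm, Real.coe_toNNReal _ (by positivity)]
    calc ‖x₁ - x₀‖ * (1 / α) ≤ D * M * (1 / α) := by gcongr
      _ ≤ 1 * (1 + L) * (1 + 1 / α) * D * M := by
          linarith [mul_nonneg (mul_nonneg (by positivity : (0:ℝ) ≤ D) hM)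
            (by positivity : 0 ≤ 1 + L + L * (1 / α))]
  · rw [coe_nnnorm, Real.norm_of_nonneg (by positivity)]
    calc L * M ≤ 1 * (1 + L) * 1 * 1 * M := by nlinarith
      _ ≤ 1 * (1 + L) * (1 + 1 / α) * D * M := by
          gcongr
          simp only [le_add_iff_nonneg_right]
          positivity
end
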